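/- arXiv:2511.21147 — 4 statements merged into one kernel-verified Lean document; each statement's English description precedes it below -/
import Mathlib

section
/- The member state choice rule Ĉ_m respects member state priorities: for any set of contracts X', an asylum seeker a with a contract in X' ends up with an accepted contract if and only if (i) the total burden-size of accepted asylum seekers with priority higher than a is strictly less than the quota q_m, and (ii) there exists a wait time w with a contract of a in X' such that the number of higher-priority accepted asylum seekers at w is strictly less than r^w_m. -/
/-- A contract at a fixed member state: `(asylum seeker, wait time)`.
Asylum seekers are labelled by naturals; `π a` is the priority rank of `a`
(smaller rank = higher priority); wait times are naturals. -/
abbrev Ctr := ℕ × ℕ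

open Classical in
/-- Pick, from a nonempty set of contracts, the lowest-wait-time contract of the
highest-priority asylum seeker (lexicographic minimum of (rank, wait, agent)). -/
noncomputable def pick (π : ℕ → ℕ) (Z : Finset Ctr) (h : Z.Nonempty) : Ctr :=
  let k := (Z.image fun x => toLex ((π x.1 : ℕ), toLex (x.2, x.1))).min'
    (h.image _)
  ((ofLex (ofLex k).2).2, (ofLex (ofLex k).2).1)

open Classical in
/-- One run of the greedy algorithm with fuel.  `excl = true` excludes all
contracts of already accepted asylum seekers (the rule `Ĉ_m`), `excl = false`
excludes only already accepted contracts (the completion `Ĉ'_m`). -/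
noncomputable def run (s : ℕ → ℕ) (q : ℕ) (r π : ℕ → ℕ) (excl : Bool)
    (X' : Finset Ctr) : ℕ → Finset Ctr → Finset Ctr
  | 0, acc => acc
  | n+1, acc =>
    let Z : Finset Ctr := X'.filter fun x =>
      (acc.filter fun y => y.2 = x.2).card < r x.2 ∧
      (excl = true → ∀ y ∈ acc, y.1 ≠ x.1) ∧
      (excl = false → x ∉ acc)
    if q ≤ acc.sum (fun x => s x.1) then acc
    else if h : Z.Nonempty then
      run s q r π excl X' n (insert (pick π Z h) acc)
    else acc

/-- The member state choice rule `Ĉ_m`. -/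
noncomputable def Chat (s : ℕ → ℕ) (q : ℕ) (r π : ℕ → ℕ)
    (X' : Finset Ctr) : Finset Ctr :=
  run s q r π true X' (X'.card + 1) ∅

/-- The completion `Ĉ'_m` of the member state choice rule. -/
noncomputable def Chat' (s : ℕ → ℕ) (q : ℕ) (r π : ℕ → ℕ)
    (X' : Finset Ctr) : Finset Ctr :=
  run s q r π false X' (X'.card + 1) ∅

/-!
The rule is a greedy algorithm that accepts contracts in weakly decreasing priority: each pick
has priority at least that of every contract still available, and availability only shrinks.
Hence when `a` is accepted, every accepted asylum seeker of higher priority was accepted before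
her, so at that moment the quota was not met and her wait time was not full.

Conversely, suppose `a` is never accepted and both conditions hold for `w`. A contract accepted
at `w` was picked while `(a, w)` was available, so it belongs to an asylum seeker of higher
priority (`π` is injective), and the capacity condition says that `(a, w)` is still available at
the end. Then `(a, w)` was available at every pick, so every accepted asylum seeker has higher
priority than `a`; the quota condition says the quota is not met, and the algorithm could not
have stopped.
-/

open Finset

section Greedy

variable (s : ℕ → ℕ) (q : ℕ) (r π : ℕ → ℕ) (X' : Finset Ctr)

def avail (acc : Finset Ctr) : Finset Ctr :=
  {x ∈ X' | #{y ∈ acc | y.2 = x.2} < r x.2 ∧ ∀ y ∈ acc, y.1 ≠ x.1}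

variable {r X'} in
lemma mem_avail {acc : Finset Ctr} {x : Ctr} :
    x ∈ avail r X' acc ↔ x ∈ X' ∧ #{y ∈ acc | y.2 = x.2} < r x.2 ∧ ∀ y ∈ acc, y.1 ≠ x.1 :=
  mem_filter

variable {r X'} in
lemma notMem_of_mem_avail {acc : Finset Ctr} {x : Ctr} (hx : x ∈ avail r X' acc) : x ∉ acc :=
  fun hmem => (mem_avail.1 hx).2.2 x hmem rfl

lemma avail_anti {acc acc' : Finset Ctr} (h : acc ⊆ acc') : avail r X' acc' ⊆ avail r X' acc := by
  intro x hx
  rw [mem_avail] at hx ⊢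
  exact ⟨hx.1, (card_le_card (filter_subset_filter _ h)).trans_lt hx.2.1,
    fun y hy => hx.2.2 y (h hy)⟩

lemma pick_mem_and_le (Z : Finset Ctr) (h : Z.Nonempty) :
    pick π Z h ∈ Z ∧ ∀ c ∈ Z, π (pick π Z h).1 ≤ π c.1 := by
  set key : Ctr → ℕ ×ₗ (ℕ ×ₗ ℕ) := fun x => toLex (π x.1, toLex (x.2, x.1))
  obtain ⟨x, hx, hkey⟩ := mem_image.1 (min'_mem (Z.image key) (h.image _))
  have hpick : pick π Z h = x := by simp only [pick, ← hkey, key, ofLex_toLex]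
  refine ⟨hpick ▸ hx, fun c hc => ?_⟩
  have hle := min'_le (Z.image key) _ (mem_image_of_mem key hc)
  rw [← hkey] at hle
  rcases Prod.Lex.le_iff.1 hle with hlt | ⟨heq, -⟩
  · exact hpick ▸ hlt.le
  · exact hpick ▸ heq.le

lemma run_true_succ (n : ℕ) (acc : Finset Ctr) :
    run s q r π true X' (n + 1) acc =
      if q ≤ ∑ x ∈ acc, s x.1 then acc
      else if h : (avail r X' acc).Nonempty then
        run s q r π true X' n (insert (pick π _ h) acc)
      else acc := by
  have hZ : {x ∈ X' | #{y ∈ acc | y.2 = x.2} < r x.2 ∧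
      (true = true → ∀ y ∈ acc, y.1 ≠ x.1) ∧ (true = false → x ∉ acc)} = avail r X' acc := by
    simp only [avail, forall_const, Bool.true_eq_false, IsEmpty.forall_iff, and_true]
  rw [run, hZ]

variable {s q r π X'} in
lemma run_induction {P : Finset Ctr → Prop}
    (step : ∀ acc (h : (avail r X' acc).Nonempty), ∑ x ∈ acc, s x.1 < q → P acc →
      P (insert (pick π _ h) acc))
    (n : ℕ) {acc : Finset Ctr} (h₀ : P acc) : P (run s q r π true X' n acc) := by
  induction n generalizing acc with
  | zero => exact h₀
  | succ n ih =>
    rw [run_true_succ]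
    split_ifs with hq hZ
    · exact h₀
    · exact ih (step acc hZ (not_le.1 hq) h₀)
    · exact h₀

lemma run_stop {n : ℕ} {acc : Finset Ctr} (hn : #(X' \ acc) < n) :
    q ≤ ∑ x ∈ run s q r π true X' n acc, s x.1 ∨ avail r X' (run s q r π true X' n acc) = ∅ := by
  induction n generalizing acc with
  | zero => omega
  | succ n ih =>
    rw [run_true_succ]
    split_ifs with hq hZ
    · exact Or.inl hq
    · apply ih
      have hp := (pick_mem_and_le π _ hZ).1
      have hp' : pick π _ hZ ∈ X' \ acc := mem_sdiff.2 ⟨(mem_avail.1 hp).1, notMem_of_mem_avail hp⟩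
      rw [sdiff_insert]
      exact (card_erase_lt_of_mem hp').trans_le (Nat.lt_succ_iff.1 hn)
    · exact Or.inr (not_nonempty_iff_eq_empty.1 hZ)

def IsGreedyChoice (B : Finset Ctr) (x : Ctr) : Prop :=
  ∑ y ∈ B, s y.1 < q ∧ x ∈ avail r X' B ∧ ∀ c ∈ avail r X' B, π x.1 ≤ π c.1

/-- `history` records, for each accepted contract, the state `B` from which it was picked. -/
structure GreedyInvariant (acc : Finset Ctr) : Prop where
  le_avail : ∀ x ∈ acc, ∀ c ∈ avail r X' acc, π x.1 ≤ π c.1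
  history : ∀ x ∈ acc, ∃ B ⊆ acc, IsGreedyChoice s q r π X' B x ∧ ∀ y ∈ acc \ B, π x.1 ≤ π y.1

lemma greedyInvariant_empty : GreedyInvariant s q r π X' ∅ :=
  ⟨by simp, by simp⟩

variable {s q r π X'} in
lemma GreedyInvariant.insert_pick {acc : Finset Ctr} (hI : GreedyInvariant s q r π X' acc)
    (h : (avail r X' acc).Nonempty) (hq : ∑ x ∈ acc, s x.1 < q) :
    GreedyInvariant s q r π X' (insert (pick π _ h) acc) := by
  obtain ⟨hp, hp_le⟩ := pick_mem_and_le π _ h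
  have havail := avail_anti r X' (subset_insert (pick π _ h) acc)
  constructor
  · intro x hx c hc
    rcases mem_insert.1 hx with rfl | hx
    · exact hp_le c (havail hc)
    · exact hI.le_avail x hx c (havail hc)
  · intro x hx
    rcases mem_insert.1 hx with rfl | hx
    · refine ⟨acc, subset_insert _ _, ⟨hq, hp, hp_le⟩, fun y hy => ?_⟩
      obtain ⟨hy, hy'⟩ := mem_sdiff.1 hy
      rcases mem_insert.1 hy with rfl | hy
      · exact le_rfl
      · exact absurd hy hy'
    · obtain ⟨B, hB, hchoice, hlater⟩ := hI.history x hx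
      refine ⟨B, hB.trans (subset_insert _ _), hchoice, fun y hy => ?_⟩
      obtain ⟨hy, hyB⟩ := mem_sdiff.1 hy
      rcases mem_insert.1 hy with rfl | hy
      · exact hI.le_avail x hx _ hp
      · exact hlater y (mem_sdiff.2 ⟨hy, hyB⟩)

lemma greedyInvariant_chat : GreedyInvariant s q r π X' (Chat s q r π X') :=
  run_induction (fun _ h hq hI => hI.insert_pick h hq) _ (greedyInvariant_empty s q r π X')

lemma chat_stop :
    q ≤ ∑ x ∈ Chat s q r π X', s x.1 ∨ avail r X' (Chat s q r π X') = ∅ :=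
  run_stop s q r π X' (by simp)

def Qualifies (A : Finset Ctr) (a : ℕ) : Prop :=
  (∑ y ∈ A with π y.1 < π a, s y.1) < q ∧
    ∃ w, (a, w) ∈ X' ∧ #{y ∈ A | y.2 = w ∧ π y.1 < π a} < r w

variable {s q r π X'}

lemma GreedyInvariant.qualifies_of_mem {acc : Finset Ctr} (hI : GreedyInvariant s q r π X' acc)
    {x : Ctr} (hx : x ∈ acc) : Qualifies s q r π X' acc x.1 := by
  obtain ⟨B, hB, ⟨hsum, hxB, -⟩, hlater⟩ := hI.history x hx
  have hhigher : {y ∈ acc | π y.1 < π x.1} ⊆ B := fun y hy => by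
    rw [mem_filter] at hy
    by_contra hyB
    exact (hlater y (mem_sdiff.2 ⟨hy.1, hyB⟩)).not_gt hy.2
  obtain ⟨hxX, hcard, -⟩ := mem_avail.1 hxB
  refine ⟨(sum_le_sum_of_subset hhigher).trans_lt hsum, x.2, hxX, ?_⟩
  refine (card_le_card fun y hy => ?_).trans_lt hcard
  rw [mem_filter] at hy ⊢
  exact ⟨hhigher (mem_filter.2 ⟨hy.1, hy.2.2⟩), hy.2.1⟩

lemma GreedyInvariant.exists_mem_of_qualifies {acc : Finset Ctr}
    (hI : GreedyInvariant s q r π X' acc)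
    (hstop : q ≤ ∑ x ∈ acc, s x.1 ∨ avail r X' acc = ∅) (hπ : Function.Injective π) {a : ℕ}
    (ha : Qualifies s q r π X' acc a) : ∃ x ∈ acc, x.1 = a := by
  obtain ⟨hsum, w, hw, hcard⟩ := ha
  by_contra! hna
  have hprio : ∀ y ∈ acc, π y.1 ≤ π a → π y.1 < π a := fun y hy hle =>
    hle.lt_of_ne fun h => hna y hy (hπ h)
  have hw_higher : ∀ y ∈ acc, y.2 = w → π y.1 < π a := by
    intro y hy hyw
    obtain ⟨B, hB, ⟨-, hyB, hmin⟩, -⟩ := hI.history y hy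
    refine hprio y hy (hmin (a, w) (mem_avail.2 ⟨hw, ?_, fun z hz => hna z (hB hz)⟩))
    exact hyw ▸ (mem_avail.1 hyB).2.1
  have haw : (a, w) ∈ avail r X' acc := by
    have hsame : {y ∈ acc | y.2 = w} = {y ∈ acc | y.2 = w ∧ π y.1 < π a} :=
      filter_congr fun y hy => ⟨fun h => ⟨h, hw_higher y hy h⟩, And.left⟩
    exact mem_avail.2 ⟨hw, hsame ▸ hcard, hna⟩
  have hall : ∀ y ∈ acc, π y.1 < π a := fun y hy => hprio y hy (hI.le_avail y hy _ haw)
  rw [filter_true_of_mem hall] at hsum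
  rcases hstop with hq | hempty
  · exact hq.not_gt hsum
  · exact notMem_empty _ (hempty ▸ haw)

end Greedy

theorem chat_respectsPriorities_general (s : ℕ → ℕ) (q : ℕ) (r π : ℕ → ℕ)
    (hπ : Function.Injective π) (X' : Finset Ctr) (a : ℕ) :
    (∃ x ∈ Chat s q r π X', x.1 = a) ↔
      (((Chat s q r π X').filter fun y => π y.1 < π a).sum fun y => s y.1) < q ∧
      ∃ w : ℕ, (a, w) ∈ X' ∧
        ((Chat s q r π X').filter fun y => y.2 = w ∧ π y.1 < π a).card < r w := by
  have hI := greedyInvariant_chat s q r π X'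
  constructor
  · rintro ⟨x, hx, rfl⟩
    exact hI.qualifies_of_mem hx
  · exact hI.exists_mem_of_qualifies (chat_stop s q r π X') hπ

/-- respect of member state priorities: an asylum seeker `a`
with a contract in `X'` is accepted iff she qualifies for acceptance (the
burden-size of higher-priority accepted asylum seekers is below the quota) and
qualifies for some wait time of one of her contracts. -/
theorem chat_respectsPriorities (s : ℕ → ℕ) (q : ℕ) (r π : ℕ → ℕ)
    (hπ : Function.Injective π) (X' : Finset Ctr) (a : ℕ)
    (ha : ∃ x ∈ X', x.1 = a) :
    (∃ x ∈ Chat s q r π X', x.1 = a) ↔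
      (((Chat s q r π X').filter fun y => π y.1 < π a).sum fun y => s y.1) < q ∧
      ∃ w : ℕ, (a, w) ∈ X' ∧
        ((Chat s q r π X').filter fun y => y.2 = w ∧ π y.1 < π a).card < r w :=
  chat_respectsPriorities_general s q r π hπ X' a
end

section
/- The member state choice rule Ĉ_m satisfies the irrelevance of rejected contracts condition: for every set of contracts X' and any contract x ∉ X', if x is not chosen from X' ∪ {x}, then Ĉ_m(X' ∪ {x}) = Ĉ_m(X'). -/
noncomputable def F (π : ℕ → ℕ) : Ctr → Lex (ℕ × Lex (ℕ × ℕ)) :=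
  fun x => toLex ((π x.1 : ℕ), toLex (x.2, x.1))

open Classical in
lemma pick_spec (π : ℕ → ℕ) (Z : Finset Ctr) (h : Z.Nonempty) :
    pick π Z h ∈ Z ∧
      F π (pick π Z h) = (Z.image (F π)).min' (h.image _) := by
  have hk := (Z.image (F π)).min'_mem (h.image _)
  rw [Finset.mem_image] at hk
  obtain ⟨y, hy, hyk⟩ := hk
  have hp : pick π Z h = y := by
    show ((ofLex (ofLex ((Z.image (F π)).min' (h.image _))).2).2,
      (ofLex (ofLex ((Z.image (F π)).min' (h.image _))).2).1) = y
    rw [← hyk]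
    rfl
  rw [hp, hyk]
  exact ⟨hy, rfl⟩

open Classical in
lemma pick_congr (π : ℕ → ℕ) {Z Z' : Finset Ctr} (hsub : Z ⊆ Z')
    (h : Z.Nonempty) (h' : Z'.Nonempty) (hp : pick π Z' h' ∈ Z) :
    pick π Z h = pick π Z' h' := by
  have hmin : (Z.image (F π)).min' (h.image _) = (Z'.image (F π)).min' (h'.image _) := by
    apply le_antisymm
    · rw [← (pick_spec π Z' h').2]
      exact Finset.min'_le _ _ (Finset.mem_image_of_mem _ hp)
    · exact Finset.min'_subset _ (Finset.image_subset_image hsub)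
  show ((ofLex (ofLex ((Z.image (F π)).min' (h.image _))).2).2,
      (ofLex (ofLex ((Z.image (F π)).min' (h.image _))).2).1)
    = ((ofLex (ofLex ((Z'.image (F π)).min' (h'.image _))).2).2,
      (ofLex (ofLex ((Z'.image (F π)).min' (h'.image _))).2).1)
  rw [hmin]

open Classical in
lemma subset_run (s : ℕ → ℕ) (q : ℕ) (r π : ℕ → ℕ) (b : Bool) (X' : Finset Ctr) :
    ∀ n acc, acc ⊆ run s q r π b X' n acc := by
  intro n
  induction n with
  | zero => intro acc; rw [run]
  | succ n ih =>
    intro acc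
    rw [run]
    split
    · exact Finset.Subset.refl _
    · split
      · exact (Finset.subset_insert _ _).trans (ih _)
      · exact Finset.Subset.refl _

open Classical in
lemma run_succ_eq (s : ℕ → ℕ) (q : ℕ) (r π : ℕ → ℕ) (X' : Finset Ctr) :
    ∀ n acc, (X' \ acc).card ≤ n →
      run s q r π true X' (n+1) acc = run s q r π true X' n acc := by
  intro n
  induction n with
  | zero =>
    intro acc hcard
    have hsub : X' ⊆ acc := by
      rw [Nat.le_zero, Finset.card_eq_zero, Finset.sdiff_eq_empty_iff_subset] at hcard
      exact hcard
    rw [run, run]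
    split
    · rfl
    · split
      · next hZ =>
        exfalso
        obtain ⟨z, hz⟩ := hZ
        rw [Finset.mem_filter] at hz
        exact hz.2.2.1 rfl z (hsub hz.1) rfl
      · rfl
  | succ n ih =>
    intro acc hcard
    rw [run]
    conv_rhs => rw [run]
    split
    · rfl
    · split
      · next hZ =>
        have hp := (Finset.mem_filter.mp (pick_spec π _ hZ).1)
        have hpx : pick π _ hZ ∈ X' := hp.1
        have hpa : pick π _ hZ ∉ acc := fun hmem =>
          hp.2.2.1 rfl _ hmem rfl
        apply ih
        have : X' \ insert (pick π _ hZ) acc = (X' \ acc).erase (pick π _ hZ) := by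
          ext z
          simp [Finset.mem_sdiff, Finset.mem_erase, Finset.mem_insert]
          tauto
        rw [this]
        have hmem : pick π _ hZ ∈ X' \ acc := Finset.mem_sdiff.mpr ⟨hpx, hpa⟩
        have := Finset.card_erase_of_mem hmem
        omega
      · rfl

open Classical in
lemma run_insert_eq (s : ℕ → ℕ) (q : ℕ) (r π : ℕ → ℕ) (X' : Finset Ctr)
    (x : Ctr) (hx : x ∉ X') :
    ∀ n acc, x ∉ acc → x ∉ run s q r π true (insert x X') n acc →
      run s q r π true (insert x X') n acc = run s q r π true X' n acc := by
  intro n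
  induction n with
  | zero => intro acc _ _; rw [run, run]
  | succ n ih =>
    intro acc hxa hxr
    rw [run] at hxr ⊢
    conv_rhs => rw [run]
    split
    · rfl
    · next hq =>
      rw [if_neg hq] at hxr
      set P : Ctr → Prop := fun z =>
        (acc.filter fun y => y.2 = z.2).card < r z.2 ∧
        (true = true → ∀ y ∈ acc, y.1 ≠ z.1) ∧
        (true = false → z ∉ acc) with hP
      have hZ' : (insert x X').filter P =
          if P x then insert x (X'.filter P) else X'.filter P :=
        Finset.filter_insert _ _ _
      by_cases h' : ((insert x X').filter P).Nonempty
      · rw [dif_pos h'] at hxr ⊢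
        set p := pick π _ h' with hpdef
        have hpmem : p ∈ (insert x X').filter P := (pick_spec π _ h').1
        have hpne : p ≠ x := by
          intro he
          apply hxr
          have : p ∈ insert p acc := Finset.mem_insert_self p acc
          exact subset_run s q r π true (insert x X') n (insert p acc) (he ▸ this)
        have hpZ : p ∈ X'.filter P := by
          rw [hZ'] at hpmem
          split at hpmem
          · exact (Finset.mem_insert.mp hpmem).resolve_left hpne
          · exact hpmem
        have hZne : (X'.filter P).Nonempty := ⟨p, hpZ⟩
        rw [dif_pos hZne]
        have hsub : X'.filter P ⊆ (insert x X').filter P :=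
          Finset.filter_subset_filter _ (Finset.subset_insert _ _)
        have hpc : pick π (X'.filter P) hZne = p := pick_congr π hsub hZne h' hpZ
        rw [hpc]
        exact ih _ (by simp [Finset.mem_insert, hpne.symm, hxa]) hxr
      · rw [dif_neg h'] at hxr ⊢
        have : ¬ (X'.filter P).Nonempty := fun ⟨z, hz⟩ => h' ⟨z, by
          rw [hZ']; split
          · exact Finset.mem_insert_of_mem hz
          · exact hz⟩
        rw [dif_neg this]

/-- Proposition 1: `Ĉ_m` satisfies irrelevance of rejected
contracts. -/
theorem chat_irc (s : ℕ → ℕ) (q : ℕ) (r π : ℕ → ℕ)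
    (hπ : Function.Injective π) (X' : Finset Ctr) (x : Ctr) (hx : x ∉ X')
    (hrej : x ∉ Chat s q r π (insert x X')) :
    Chat s q r π (insert x X') = Chat s q r π X' := by
  unfold Chat at hrej ⊢
  rw [Finset.card_insert_of_notMem hx] at hrej ⊢
  rw [run_insert_eq s q r π X' x hx _ ∅ (Finset.notMem_empty x) hrej]
  apply run_succ_eq
  simp
end

section
/- In the two-asylum-seeker instance of Example 1, the choice rule Ĉ_m also violates unilateral substitutability: there exist X' ⊆ X and contracts x, x' ∉ X' with the asylum seeker of x not appearing in X', such that x ∈ Ĉ_m(X' ∪ {x, x'}) but x ∉ Ĉ_m(X' ∪ {x}). -/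
lemma pick_eq (Z : Finset Ctr) (h : Z.Nonempty) (a : Ctr)
    (h1 : toLex ((a.1:ℕ), toLex (a.2, a.1)) ∈ Z.image fun x => toLex ((id x.1 : ℕ), toLex (x.2, x.1)))
    (h2 : ∀ b ∈ Z.image fun x => toLex ((id x.1 : ℕ), toLex (x.2, x.1)), toLex ((a.1:ℕ), toLex (a.2, a.1)) ≤ b) :
    pick id Z h = a := by
  simp only [pick]
  rw [le_antisymm (Finset.min'_le _ _ h1) (Finset.le_min' _ _ _ h2)]
  rfl

lemma run_step (q : ℕ) (X acc : Finset Ctr) (n : ℕ)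
    (hq : ¬ q ≤ acc.sum (fun _ => 1))
    (Z : Finset Ctr) (a : Ctr)
    (hZ : (X.filter fun x => (acc.filter fun y => y.2 = x.2).card < 1 ∧
        ((true:Bool) = true → ∀ y ∈ acc, y.1 ≠ x.1) ∧ ((true:Bool) = false → x ∉ acc)) = Z)
    (hZne : Z.Nonempty) (ha : pick id Z hZne = a) :
    run (fun _ => 1) q (fun _ => 1) id true X (n+1) acc
      = run (fun _ => 1) q (fun _ => 1) id true X n (insert a acc) := by
  subst ha
  rw [run, if_neg hq]
  simp only [Finset.filter_congr_decidable] at hZ ⊢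
  subst hZ
  rw [dif_pos hZne]

lemma run_stop_full (q : ℕ) (X acc : Finset Ctr) (n : ℕ)
    (hq : q ≤ acc.sum (fun _ => 1)) :
    run (fun _ => 1) q (fun _ => 1) id true X (n+1) acc = acc := by
  rw [run, if_pos hq]

lemma run_stop_empty (q : ℕ) (X acc : Finset Ctr) (n : ℕ)
    (hq : ¬ q ≤ acc.sum (fun _ => 1))
    (hZ : (X.filter fun x => (acc.filter fun y => y.2 = x.2).card < 1 ∧
        ((true:Bool) = true → ∀ y ∈ acc, y.1 ≠ x.1) ∧ ((true:Bool) = false → x ∉ acc)) = ∅) :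
    run (fun _ => 1) q (fun _ => 1) id true X (n+1) acc = acc := by
  rw [run, if_neg hq]
  simp only [Finset.filter_congr_decidable] at hZ ⊢
  rw [dif_neg (by rw [hZ]; simp)]

/-- Remark 1: in the Example 1 instance, `Ĉ_m` also violates
unilateral substitutability: there are `X'` and contracts `x, x' ∉ X'` with the
asylum seeker of `x` not appearing in `X'`, `x ∈ Ĉ_m(X' ∪ {x, x'})`, yet
`x ∉ Ĉ_m(X' ∪ {x})`. -/
theorem chat_not_unilaterally_substitutable :
    ∃ (X' : Finset Ctr) (x x' : Ctr), x ∉ X' ∧ x' ∉ X' ∧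
      (∀ y ∈ X', y.1 ≠ x.1) ∧
      x ∈ Chat (fun _ => 1) 2 (fun _ => 1) id (insert x (insert x' X')) ∧
      x ∉ Chat (fun _ => 1) 2 (fun _ => 1) id (insert x X') := by
  refine ⟨{(1,2)}, (2,2), (1,1), by decide, by decide, by decide, ?_, ?_⟩
  · show (2,2) ∈ Chat (fun _ => 1) 2 (fun _ => 1) id {(2,2),(1,1),(1,2)}
    rw [Chat, show ({(2,2),(1,1),(1,2)} : Finset Ctr).card = 3 from by decide]
    rw [run_step 2 _ _ _ (by simp) {(2,2),(1,1),(1,2)} (1,1)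
      (Finset.filter_true_of_mem (by simp)) ⟨(1,1), by simp⟩
      (pick_eq _ _ _ (by decide) (by decide))]
    rw [run_step 2 _ _ _ (by simp) {(2,2)} (2,2)
      (by simp [Finset.filter_insert, Finset.filter_singleton])
      ⟨(2,2), by simp⟩
      (pick_eq _ _ _ (by decide) (by decide))]
    rw [run_stop_full 2 _ _ _ (by simp)]
    simp
  · show (2,2) ∉ Chat (fun _ => 1) 2 (fun _ => 1) id {(2,2),(1,2)}
    rw [Chat, show ({(2,2),(1,2)} : Finset Ctr).card = 2 from by decide]
    rw [run_step 2 _ _ _ (by simp) {(2,2),(1,2)} (1,2)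
      (Finset.filter_true_of_mem (by simp)) ⟨(1,2), by simp⟩
      (pick_eq _ _ _ (by decide) (by decide))]
    rw [run_stop_empty 2 _ _ _ (by simp)
      (by simp [Finset.filter_insert, Finset.filter_singleton])]
    simp
end

section
/- If all asylum seekers have identical burden-sizes, then the completion Ĉ'_m simultaneously satisfies substitutability, the law of aggregate demand, and the irrelevance of rejected contracts. -/
open Finset

def key (π : ℕ → ℕ) (x : Ctr) : Lex (ℕ × Lex (ℕ × ℕ)) := toLex (π x.1, toLex (x.2, x.1))

theorem key_injective (π : ℕ → ℕ) : Function.Injective (key π) := fun _ _ h => by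
  have h2 := congrArg (fun k => ofLex (ofLex k).2) h
  exact Prod.ext (congrArg Prod.snd h2) (congrArg Prod.fst h2)

theorem pick_eq_s12 {π : ℕ → ℕ} {Z : Finset Ctr} (h : Z.Nonempty) {z : Ctr} (hz : z ∈ Z)
    (hmin : ∀ y ∈ Z, key π z ≤ key π y) : pick π Z h = z := by
  have hm : (Z.image (key π)).min' (h.image _) = key π z :=
    le_antisymm (min'_le _ _ (mem_image_of_mem _ hz)) (le_min' _ _ _ (forall_mem_image.2 hmin))
  rw [pick]
  erw [hm]
  rfl

def waitCount (acc : Finset Ctr) (w : ℕ) : ℕ := #(acc.filter fun y => y.2 = w)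

def Feasible (r : ℕ → ℕ) (acc : Finset Ctr) (x : Ctr) : Prop :=
  waitCount acc x.2 < r x.2 ∧ x ∉ acc

theorem waitCount_mono {S T : Finset Ctr} (h : S ⊆ T) (w : ℕ) : waitCount S w ≤ waitCount T w :=
  card_le_card (filter_subset_filter _ h)

theorem waitCount_insert {y : Ctr} {S : Finset Ctr} (hy : y ∉ S) (w : ℕ) :
    waitCount (insert y S) w = if y.2 = w then waitCount S w + 1 else waitCount S w := by
  unfold waitCount
  rw [filter_insert]
  split
  · exact card_insert_of_notMem fun h => hy (mem_filter.1 h).1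
  · rfl

theorem Feasible.anti {r : ℕ → ℕ} {S T : Finset Ctr} (h : S ⊆ T) {x : Ctr}
    (hx : Feasible r T x) : Feasible r S x :=
  ⟨(waitCount_mono h _).trans_lt hx.1, fun hS => hx.2 (h hS)⟩

section Run

variable {s : ℕ → ℕ} {q : ℕ} {r π : ℕ → ℕ} {X' acc : Finset Ctr} {n : ℕ}

theorem run_of_le_sum {e : Bool} (hq : q ≤ ∑ x ∈ acc, s x.1) :
    run s q r π e X' n acc = acc := by
  cases n <;> simp [run, hq]

theorem run_of_forall_not_feasible (hX' : ∀ y ∈ X', ¬ Feasible r acc y) :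
    run s q r π false X' n acc = acc := by
  cases n with
  | zero => rfl
  | succ n =>
    rw [run]
    split_ifs with _ h
    · rfl
    · obtain ⟨y, hy⟩ := h
      rw [mem_filter] at hy
      exact absurd ⟨hy.2.1, hy.2.2.2 rfl⟩ (hX' y hy.1)
    · rfl

theorem run_succ_of_forall_key_le {x : Ctr} (hq : ¬ q ≤ ∑ y ∈ acc, s y.1) (hx : x ∈ X')
    (hfx : Feasible r acc x) (hmin : ∀ y ∈ X', Feasible r acc y → key π x ≤ key π y) :
    run s q r π false X' (n + 1) acc = run s q r π false X' n (insert x acc) := by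
  rw [run, if_neg hq]
  split
  case isTrue h =>
    rw [pick_eq_s12 h (z := x) (mem_filter.2 ⟨hx, hfx.1, nofun, fun _ => hfx.2⟩)]
    intro y hy
    rw [mem_filter] at hy
    exact hmin y hy.1 ⟨hy.2.1, hy.2.2.2 rfl⟩
  case isFalse h =>
    exact absurd ⟨x, mem_filter.2 ⟨hx, hfx.1, nofun, fun _ => hfx.2⟩⟩ h

end Run

open Classical in
/-- The scan of a list of contracts behind `Ĉ'_m`, with the quota abstracted to a predicate
`full` on the number of accepted contracts. -/
noncomputable def greedy (full : ℕ → Prop) (r : ℕ → ℕ) : List Ctr → Finset Ctr → Finset Ctr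
  | [], acc => acc
  | x :: L, acc =>
    if full #acc then acc
    else if Feasible r acc x then greedy full r L (insert x acc)
    else greedy full r L acc

section Greedy

variable {full : ℕ → Prop} {r : ℕ → ℕ}

theorem greedy_of_full {L : List Ctr} {acc : Finset Ctr} (h : full #acc) :
    greedy full r L acc = acc := by
  cases L <;> simp [greedy, h]

theorem subset_greedy (L : List Ctr) (acc : Finset Ctr) : acc ⊆ greedy full r L acc := by
  induction L generalizing acc with
  | nil => exact subset_rfl
  | cons x L ih =>
    rw [greedy]
    split_ifs
    · exact subset_rfl
    · exact (subset_insert _ _).trans (ih _)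
    · exact ih _

theorem greedy_subset_union (L : List Ctr) (acc : Finset Ctr) :
    greedy full r L acc ⊆ acc ∪ L.toFinset := by
  induction L generalizing acc with
  | nil => simp [greedy]
  | cons x L ih =>
    rw [greedy, List.toFinset_cons]
    split_ifs
    · exact subset_union_left
    · exact (ih _).trans (by rw [union_insert, insert_union])
    · exact (ih _).trans (union_subset_union_right (subset_insert _ _))

theorem greedy_append (A B : List Ctr) (acc : Finset Ctr) :
    greedy full r (A ++ B) acc = greedy full r B (greedy full r A acc) := by
  induction A generalizing acc with
  | nil => rfl
  | cons x A ih =>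
    rw [List.cons_append, greedy, greedy]
    split_ifs with h
    · exact (greedy_of_full h).symm
    all_goals exact ih _

theorem card_greedy_le_max (hfull : Monotone full) {k : ℕ} (hk : full k) (L : List Ctr)
    (acc : Finset Ctr) : #(greedy full r L acc) ≤ max #acc k := by
  induction L generalizing acc with
  | nil => exact le_max_left _ _
  | cons x L ih =>
    rw [greedy]
    split_ifs with hacc hx
    · exact le_max_left _ _
    · have : #acc < k := lt_of_not_ge fun h => hacc (hfull h hk)
      refine (ih _).trans ?_
      rw [card_insert_of_notMem hx.2]
      omega
    · exact ih _

theorem exists_greedy_eq_union {L : List Ctr} {S T : Finset Ctr} (hL : L.Nodup)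
    (hcard : #S = #T) (hcount : ∀ w, waitCount S w = waitCount T w)
    (hLST : ∀ z ∈ L, z ∉ S ∧ z ∉ T) :
    ∃ D, Disjoint S D ∧ Disjoint T D ∧
      greedy full r L S = S ∪ D ∧ greedy full r L T = T ∪ D := by
  induction L generalizing S T with
  | nil => exact ⟨∅, disjoint_empty_right _, disjoint_empty_right _, by simp [greedy]⟩
  | cons y L ih =>
    obtain ⟨hyL, hL⟩ := List.nodup_cons.1 hL
    obtain ⟨hyS, hyT⟩ := hLST y List.mem_cons_self
    have hfeas : Feasible r S y ↔ Feasible r T y := by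
      simp only [Feasible, hcount, hyS, hyT, not_false_eq_true, and_true]
    rw [greedy, greedy, hcard]
    split_ifs with _ hS hT hT
    · exact ⟨∅, disjoint_empty_right _, disjoint_empty_right _, by simp⟩
    · obtain ⟨D, hSD, hTD, hS', hT'⟩ := ih (S := insert y S) (T := insert y T) hL
        (by rw [card_insert_of_notMem hyS, card_insert_of_notMem hyT, hcard])
        (fun w => by rw [waitCount_insert hyS, waitCount_insert hyT, hcount])
        (fun z hz => by
          have hzy : z ≠ y := ne_of_mem_of_not_mem hz hyL
          simpa [hzy] using hLST z (List.mem_cons_of_mem _ hz))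
      refine ⟨insert y D, ?_, ?_, ?_, ?_⟩
      · exact disjoint_insert_right.2 ⟨hyS, disjoint_of_subset_left (subset_insert _ _) hSD⟩
      · exact disjoint_insert_right.2 ⟨hyT, disjoint_of_subset_left (subset_insert _ _) hTD⟩
      · rw [hS', insert_union, union_insert]
      · rw [hT', insert_union, union_insert]
    · exact absurd (hfeas.1 hS) hT
    · exact absurd (hfeas.2 hT) hS
    · exact ih hL hcard hcount fun z hz => hLST z (List.mem_cons_of_mem _ hz)

theorem greedy_insert_swap {L : List Ctr} {x y : Ctr} {S : Finset Ctr} (hL : L.Nodup)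
    (hxS : x ∉ S) (hyS : y ∉ S) (hxy : x.2 = y.2) (hLS : ∀ z ∈ L, z ∉ S ∧ z ≠ x ∧ z ≠ y) :
    #(greedy full r L (insert y S)) ≤ #(greedy full r L (insert x S)) ∧
      greedy full r L (insert x S) ⊆ insert x (greedy full r L (insert y S)) := by
  obtain ⟨D, hyD, hxD, hy, hx⟩ :=
    exists_greedy_eq_union (full := full) (r := r) (S := insert y S) (T := insert x S) hL
      (by rw [card_insert_of_notMem hyS, card_insert_of_notMem hxS])
      (fun w => by rw [waitCount_insert hyS, waitCount_insert hxS, hxy])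
      (fun z hz => by simp [(hLS z hz).1, (hLS z hz).2.1, (hLS z hz).2.2])
  rw [hy, hx, card_union_of_disjoint hyD, card_union_of_disjoint hxD,
    card_insert_of_notMem hyS, card_insert_of_notMem hxS, insert_union, insert_union]
  exact ⟨le_rfl, insert_subset_insert _ (subset_insert _ _)⟩

theorem greedy_insert_card_le_and_subset (hfull : Monotone full) {L : List Ctr} {x : Ctr}
    {S : Finset Ctr} (hL : L.Nodup) (hxS : x ∉ S) (hxL : x ∉ L) (hLS : ∀ z ∈ L, z ∉ S) :
    #(greedy full r L S) ≤ #(greedy full r L (insert x S)) ∧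
      greedy full r L (insert x S) ⊆ insert x (greedy full r L S) := by
  induction L generalizing S with
  | nil => exact ⟨card_le_card (subset_insert _ _), subset_rfl⟩
  | cons y L ih =>
    obtain ⟨hyL, hL⟩ := List.nodup_cons.1 hL
    obtain ⟨hxy, hxL⟩ := List.ne_and_not_mem_of_not_mem_cons hxL
    have hyS : y ∉ S := hLS y List.mem_cons_self
    have hLS' : ∀ z ∈ L, z ∉ S := fun z hz => hLS z (List.mem_cons_of_mem _ hz)
    have hcard : #(insert x S) = #S + 1 := card_insert_of_notMem hxS
    by_cases hS : full #S
    · rw [greedy_of_full hS, greedy_of_full (hfull (by omega) hS)]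
      exact ⟨card_le_card (subset_insert _ _), subset_rfl⟩
    by_cases hT : full #(insert x S)
    · rw [greedy_of_full hT]
      exact ⟨(card_greedy_le_max hfull hT _ _).trans (by omega),
        insert_subset_insert _ (subset_greedy _ _)⟩
    rw [greedy, greedy, if_neg hS, if_neg hT]
    by_cases hyT : Feasible r (insert x S) y
    · rw [if_pos (hyT.anti (subset_insert _ _)), if_pos hyT, insert_comm]
      exact ih hL (by simp [hxy, hxS]) hxL fun z hz => by
        simp [ne_of_mem_of_not_mem hz hyL, hLS' z hz]
    by_cases hyS' : Feasible r S y
    · rw [if_pos hyS', if_neg hyT]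
      have hw : x.2 = y.2 := by
        by_contra hne
        refine hyT ⟨?_, by simp [Ne.symm hxy, hyS]⟩
        rw [waitCount_insert hxS, if_neg hne]
        exact hyS'.1
      exact greedy_insert_swap hL hxS hyS hw fun z hz =>
        ⟨hLS' z hz, ne_of_mem_of_not_mem hz hxL, ne_of_mem_of_not_mem hz hyL⟩
    · rw [if_neg hyS', if_neg hyT]
      exact ih hL hxS hxL hLS'

theorem greedy_cons_eq_of_notMem {L : List Ctr} {x : Ctr} {S : Finset Ctr}
    (h : x ∉ greedy full r (x :: L) S) : greedy full r (x :: L) S = greedy full r L S := by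
  rw [greedy] at h ⊢
  split_ifs at h ⊢ with hS hx
  · exact (greedy_of_full hS).symm
  · exact absurd (subset_greedy _ _ (mem_insert_self x S)) h
  · rfl

theorem greedy_cons_card_le_and_subset (hfull : Monotone full) {L : List Ctr} {x : Ctr}
    {S : Finset Ctr} (hL : L.Nodup) (hxL : x ∉ L) (hLS : ∀ z ∈ L, z ∉ S) :
    #(greedy full r L S) ≤ #(greedy full r (x :: L) S) ∧
      greedy full r (x :: L) S ⊆ insert x (greedy full r L S) := by
  rw [greedy]
  split_ifs with hS hx
  · rw [greedy_of_full hS]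
    exact ⟨le_rfl, subset_insert _ _⟩
  · exact greedy_insert_card_le_and_subset hfull hL hx.2 hxL hLS
  · exact ⟨le_rfl, subset_insert _ _⟩

end Greedy

theorem exists_pairwise_key_le (π : ℕ → ℕ) (X' : Finset Ctr) :
    ∃ L : List Ctr, L.Nodup ∧ L.toFinset = X' ∧ L.Pairwise (key π · ≤ key π ·) := by
  let _ : IsTrans Ctr (key π · ≤ key π ·) := ⟨fun _ _ _ => le_trans⟩
  let _ : Std.Antisymm (key π · ≤ key π ·) :=
    ⟨fun _ _ h₁ h₂ => key_injective π (le_antisymm h₁ h₂)⟩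
  let _ : Std.Total (key π · ≤ key π ·) := ⟨fun _ _ => le_total _ _⟩
  exact ⟨X'.sort _, X'.sort_nodup _, X'.sort_toFinset _, X'.pairwise_sort _⟩

section Chat'

variable {s : ℕ → ℕ} {q : ℕ} {r π : ℕ → ℕ}

theorem run_eq_greedy (hs : ∀ a a' : ℕ, s a = s a') {X' : Finset Ctr} {L : List Ctr}
    (hsort : L.Pairwise (key π · ≤ key π ·)) (hLX : ∀ y ∈ L, y ∈ X') {n : ℕ}
    {acc : Finset Ctr} (hn : L.length ≤ n) (hdead : ∀ y ∈ X', y ∉ L → ¬ Feasible r acc y) :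
    run s q r π false X' n acc = greedy (fun k => q ≤ s 0 * k) r L acc := by
  have hsum : ∀ acc : Finset Ctr, ∑ x ∈ acc, s x.1 = s 0 * #acc := fun acc => by
    rw [sum_congr rfl fun x _ => hs x.1 0, sum_const, smul_eq_mul, mul_comm]
  induction L generalizing n acc with
  | nil => exact run_of_forall_not_feasible fun y hy => hdead y hy List.not_mem_nil
  | cons x L ih =>
    obtain ⟨hxL, hsort⟩ := List.pairwise_cons.1 hsort
    have hLX' : ∀ y ∈ L, y ∈ X' := fun y hy => hLX y (List.mem_cons_of_mem _ hy)
    obtain ⟨m, rfl⟩ : ∃ m, n = m + 1 := Nat.exists_eq_add_one.2 (by simp at hn; omega)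
    by_cases hq : q ≤ ∑ y ∈ acc, s y.1
    · rw [run_of_le_sum hq, greedy_of_full (by rwa [← hsum])]
    rw [greedy, if_neg (by rwa [← hsum])]
    by_cases hx : Feasible r acc x
    · have hmin : ∀ y ∈ X', Feasible r acc y → key π x ≤ key π y := fun y hy hfy => by
        rcases List.mem_cons.1 (not_not.1 fun h => hdead y hy h hfy) with rfl | hyL
        exacts [le_rfl, hxL y hyL]
      rw [run_succ_of_forall_key_le hq (hLX x List.mem_cons_self) hx hmin, if_pos hx]
      refine ih hsort hLX' (by simpa using hn) fun y hy hyL hfy => ?_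
      by_cases hyx : y = x
      · exact hfy.2 (hyx ▸ mem_insert_self x acc)
      · exact hdead y hy (by simp [hyx, hyL]) (hfy.anti (subset_insert _ _))
    · rw [if_neg hx]
      refine ih hsort hLX' (by simp at hn; omega) fun y hy hyL => ?_
      by_cases hyx : y = x
      · exact hyx ▸ hx
      · exact hdead y hy (by simp [hyx, hyL])

theorem chat'_eq_greedy (hs : ∀ a a' : ℕ, s a = s a') {L : List Ctr} (hL : L.Nodup)
    (hsort : L.Pairwise (key π · ≤ key π ·)) :
    Chat' s q r π L.toFinset = greedy (fun k => q ≤ s 0 * k) r L ∅ :=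
  run_eq_greedy hs hsort (fun _ => List.mem_toFinset.2)
    (by rw [List.toFinset_card_of_nodup hL]; omega)
    fun _ hy hyL => absurd (List.mem_toFinset.1 hy) hyL

theorem exists_chat'_insert_eq_greedy_cons (hs : ∀ a a' : ℕ, s a = s a') {Y : Finset Ctr}
    {x : Ctr} (hx : x ∉ Y) :
    ∃ (L : List Ctr) (S : Finset Ctr), L.Nodup ∧ x ∉ L ∧ (∀ z ∈ L, z ∉ S) ∧
      Chat' s q r π Y = greedy (fun k => q ≤ s 0 * k) r L S ∧
      Chat' s q r π (insert x Y) = greedy (fun k => q ≤ s 0 * k) r (x :: L) S := by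
  obtain ⟨M, hM, hMY, hsort⟩ := exists_pairwise_key_le π (insert x Y)
  obtain ⟨A, B, rfl⟩ := List.append_of_mem (List.mem_toFinset.1 (hMY ▸ mem_insert_self x Y))
  have hsub : (A ++ B).Sublist (A ++ x :: B) := (List.sublist_cons_self x B).append_left A
  obtain ⟨hxAB, hAB⟩ := List.nodup_cons.1 (List.nodup_middle.1 hM)
  have hABY : (A ++ B).toFinset = Y := by
    rw [← erase_insert hx, ← hMY, ← erase_insert (mt List.mem_toFinset.1 hxAB)]
    simp [union_insert]
  refine ⟨B, greedy (fun k => q ≤ s 0 * k) r A ∅, hAB.of_append_right,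
    fun h => hxAB (List.mem_append_right A h), fun z hzB hzA => ?_, ?_, ?_⟩
  · have hzA : z ∈ A := by simpa using greedy_subset_union A ∅ hzA
    exact List.disjoint_of_nodup_append hAB hzA hzB
  · rw [← hABY, chat'_eq_greedy hs hAB (hsort.sublist hsub), greedy_append]
  · rw [← hMY, chat'_eq_greedy hs hM hsort, greedy_append]

theorem monotone_le_mul (q c : ℕ) : Monotone fun k => q ≤ c * k :=
  fun _ _ h h' => h'.trans (Nat.mul_le_mul_left c h)

theorem card_chat'_le_card_chat'_insert (hs : ∀ a a' : ℕ, s a = s a') {Y : Finset Ctr}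
    {x : Ctr} (hx : x ∉ Y) : #(Chat' s q r π Y) ≤ #(Chat' s q r π (insert x Y)) := by
  obtain ⟨L, S, hL, hxL, hLS, hY, hxY⟩ :=
    exists_chat'_insert_eq_greedy_cons (q := q) (r := r) (π := π) hs hx
  rw [hY, hxY]
  exact (greedy_cons_card_le_and_subset (monotone_le_mul _ _) hL hxL hLS).1

theorem chat'_insert_subset (hs : ∀ a a' : ℕ, s a = s a') {Y : Finset Ctr} {x : Ctr}
    (hx : x ∉ Y) : Chat' s q r π (insert x Y) ⊆ insert x (Chat' s q r π Y) := by
  obtain ⟨L, S, hL, hxL, hLS, hY, hxY⟩ :=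
    exists_chat'_insert_eq_greedy_cons (q := q) (r := r) (π := π) hs hx
  rw [hY, hxY]
  exact (greedy_cons_card_le_and_subset (monotone_le_mul _ _) hL hxL hLS).2

theorem chat'_insert_eq_of_notMem (hs : ∀ a a' : ℕ, s a = s a') {Y : Finset Ctr} {x : Ctr}
    (hx : x ∉ Y) (h : x ∉ Chat' s q r π (insert x Y)) :
    Chat' s q r π (insert x Y) = Chat' s q r π Y := by
  obtain ⟨L, S, -, -, -, hY, hxY⟩ :=
    exists_chat'_insert_eq_greedy_cons (q := q) (r := r) (π := π) hs hx
  rw [hxY] at h ⊢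
  rw [hY]
  exact greedy_cons_eq_of_notMem h

end Chat'

theorem chat'_sub_lad_irc_of_homogeneous_general (s : ℕ → ℕ) (q : ℕ) (r π : ℕ → ℕ)
    (hs : ∀ a a' : ℕ, s a = s a') :
    (∀ (X' : Finset Ctr) (x x' : Ctr), x ∉ X' → x' ∉ X' →
      x ∈ Chat' s q r π (insert x (insert x' X')) → x ∈ Chat' s q r π (insert x X')) ∧
    (∀ (X' : Finset Ctr) (x : Ctr), x ∉ X' →
      (Chat' s q r π X').card ≤ (Chat' s q r π (insert x X')).card) ∧
    (∀ (X' : Finset Ctr) (x : Ctr), x ∉ X' →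
      x ∉ Chat' s q r π (insert x X') → Chat' s q r π (insert x X') = Chat' s q r π X') := by
  refine ⟨fun X' x x' hx hx' hmem => ?_, fun X' x hx => card_chat'_le_card_chat'_insert hs hx,
    fun X' x hx => chat'_insert_eq_of_notMem hs hx⟩
  rcases eq_or_ne x' x with rfl | hne
  · rwa [insert_idem] at hmem
  rw [insert_comm] at hmem
  have hx'X : x' ∉ insert x X' := by simp [hne, hx']
  exact (mem_insert.1 (chat'_insert_subset hs hx'X hmem)).resolve_left hne.symm

/-- with identical burden-sizes, the completion `Ĉ'_m`
simultaneously satisfies substitutability, the law of aggregate demand, and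
irrelevance of rejected contracts. -/
theorem chat'_sub_lad_irc_of_homogeneous (s : ℕ → ℕ) (q : ℕ) (r π : ℕ → ℕ)
    (hπ : Function.Injective π) (hs : ∀ a a' : ℕ, s a = s a') :
    (∀ (X' : Finset Ctr) (x x' : Ctr), x ∉ X' → x' ∉ X' →
      x ∈ Chat' s q r π (insert x (insert x' X')) → x ∈ Chat' s q r π (insert x X')) ∧
    (∀ (X' : Finset Ctr) (x : Ctr), x ∉ X' →
      (Chat' s q r π X').card ≤ (Chat' s q r π (insert x X')).card) ∧
    (∀ (X' : Finset Ctr) (x : Ctr), x ∉ X' →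
      x ∉ Chat' s q r π (insert x X') → Chat' s q r π (insert x X') = Chat' s q r π X') :=
  chat'_sub_lad_irc_of_homogeneous_general s q r π hs
end
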